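/- arXiv:2310.12921 — 2 statements merged into one kernel-verified Lean document; each statement's English description precedes it below -/
import Mathlib

section
/- With the setup of the previous statement and R_CLIP(s) = ⟨x_l, φ(s)⟩ for a fixed vector x_l and a bounded measurable map φ: S → ℝᵏ of unit-norm embeddings, ρ(R_CLIP, R) = (√Var(R)/√Var(R_CLIP)) · ⟨x_l, (1/μ(S_T))∫_{S_T} φ dμ − (1/μ(S_T^C))∫_{S_T^C} φ dμ⟩; i.e., the correlation is proportional to the inner product of the task embedding with the difference of mean goal-state and mean non-goal-state embeddings. -/
open MeasureTheory

noncomputable def pcov {Ω : Type*} [MeasurableSpace Ω] (μ : Measure Ω) (X Y : Ω → ℝ) : ℝ :=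
  (∫ ω, X ω * Y ω ∂μ) - (∫ ω, X ω ∂μ) * (∫ ω, Y ω ∂μ)

noncomputable def pvar {Ω : Type*} [MeasurableSpace Ω] (μ : Measure Ω) (X : Ω → ℝ) : ℝ :=
  pcov μ X X

noncomputable def pearson {Ω : Type*} [MeasurableSpace Ω] (μ : Measure Ω) (X Y : Ω → ℝ) : ℝ :=
  pcov μ X Y / (Real.sqrt (pvar μ X) * Real.sqrt (pvar μ Y))

/-- Correlation of a CLIP reward with a goal indicator via the mean-embedding difference. -/
theorem pearson_clip_mean_embedding
    {S : Type*} [MeasurableSpace S] (μ : Measure S) [IsProbabilityMeasure μ]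
    (T : Set S) (hT : MeasurableSet T)
    (hp0 : 0 < (μ T).toReal) (hp1 : (μ T).toReal < 1)
    {k : ℕ} (φ : S → EuclideanSpace ℝ (Fin k)) (hφmeas : Measurable φ)
    (hφunit : ∀ s, ‖φ s‖ = 1)
    (xl : EuclideanSpace ℝ (Fin k))
    (Rc : S → ℝ) (hRcdef : ∀ s, Rc s = (inner ℝ xl (φ s) : ℝ)) (hV : 0 < pvar μ Rc)
    (R : S → ℝ) (hR : R = T.indicator (fun _ => (1 : ℝ))) :
    pearson μ Rc R
      = Real.sqrt (pvar μ R) / Real.sqrt (pvar μ Rc) *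
        (inner ℝ xl
          ((μ T).toReal⁻¹ • (∫ s in T, φ s ∂μ)
            - (μ Tᶜ).toReal⁻¹ • (∫ s in Tᶜ, φ s ∂μ)) : ℝ) := by
  classical
  set p : ℝ := (μ T).toReal with hp
  have hμT : μ T ≠ ⊤ := measure_ne_top μ T
  have hqc : (μ Tᶜ).toReal = 1 - p := by
    have h1 : μ Tᶜ = 1 - μ T := by
      rw [measure_compl hT hμT, measure_univ]
    rw [h1, ENNReal.toReal_sub_of_le prob_le_one ENNReal.one_ne_top, ENNReal.toReal_one]
  set q : ℝ := 1 - p with hq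
  have hq0 : 0 < q := by simp only [hq]; linarith
  -- measurability / integrability
  have hRcmeas : Measurable Rc := by
    have : Measurable fun s => (inner ℝ xl (φ s) : ℝ) :=
      (measurable_const.inner hφmeas)
    simpa [funext hRcdef] using this
  have hRcbd : ∀ s, ‖Rc s‖ ≤ ‖xl‖ := by
    intro s
    rw [hRcdef s]
    calc ‖(inner ℝ xl (φ s) : ℝ)‖ ≤ ‖xl‖ * ‖φ s‖ := norm_inner_le_norm _ _
      _ = ‖xl‖ := by rw [hφunit s, mul_one]
  have hRcint : Integrable Rc μ :=
    (integrable_const ‖xl‖).mono' hRcmeas.aestronglyMeasurable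
      (Filter.Eventually.of_forall hRcbd)
  have hφint : Integrable φ μ :=
    (integrable_const (1 : ℝ)).mono' hφmeas.aestronglyMeasurable
      (Filter.Eventually.of_forall fun s => by rw [hφunit s])
  -- key integrals
  have hR2 : (fun s => R s * R s) = R := by
    funext s; by_cases h : s ∈ T <;> simp [hR, Set.indicator, h]
  have hRint : ∫ s, R s ∂μ = p := by
    rw [hR]
    exact integral_indicator_one hT (μ := μ)
  have hvarR : pvar μ R = p * q := by
    simp only [pvar, pcov, hR2, hRint]; ring
  have hRcR : (fun s => Rc s * R s) = T.indicator Rc := by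
    funext s; by_cases h : s ∈ T <;> simp [hR, Set.indicator, h]
  set A : ℝ := ∫ s in T, Rc s ∂μ with hA
  set B : ℝ := ∫ s in Tᶜ, Rc s ∂μ with hB
  have hRcRint : ∫ s, Rc s * R s ∂μ = A := by
    rw [hRcR, integral_indicator hT]
  have hRcTot : ∫ s, Rc s ∂μ = A + B := (integral_add_compl hT hRcint).symm
  have hcov : pcov μ Rc R = q * A - p * B := by
    simp only [pcov, hRcRint, hRcTot, hRint, hq]; ring
  -- inner products with mean embeddings
  have hinnT : (inner ℝ xl (∫ s in T, φ s ∂μ) : ℝ) = A := by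
    rw [← integral_inner (hφint.restrict (s := T)) xl, hA]
    exact integral_congr_ae (Filter.Eventually.of_forall fun s => (hRcdef s).symm)
  have hinnTc : (inner ℝ xl (∫ s in Tᶜ, φ s ∂μ) : ℝ) = B := by
    rw [← integral_inner (hφint.restrict (s := Tᶜ)) xl, hB]
    exact integral_congr_ae (Filter.Eventually.of_forall fun s => (hRcdef s).symm)
  have hinner : (inner ℝ xl ((μ T).toReal⁻¹ • (∫ s in T, φ s ∂μ)
      - (μ Tᶜ).toReal⁻¹ • (∫ s in Tᶜ, φ s ∂μ)) : ℝ) = p⁻¹ * A - q⁻¹ * B := by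
    rw [inner_sub_right, inner_smul_right, inner_smul_right, hinnT, hinnTc, hqc]
  -- final algebra
  rw [pearson, hcov, hinner, hvarR]
  have hVR0 : 0 < p * q := mul_pos hp0 hq0
  have hsR : Real.sqrt (p * q) > 0 := Real.sqrt_pos.mpr hVR0
  have hsC : Real.sqrt (pvar μ Rc) > 0 := Real.sqrt_pos.mpr hV
  have hsq : Real.sqrt (p * q) * Real.sqrt (p * q) = p * q := Real.mul_self_sqrt hVR0.le
  have hsp' : Real.sqrt p * Real.sqrt p = p := Real.mul_self_sqrt hp0.le
  have hsq' : Real.sqrt q * Real.sqrt q = q := Real.mul_self_sqrt hq0.le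
  field_simp
  have h2 : (Real.sqrt p * Real.sqrt p) * (Real.sqrt q * Real.sqrt q) = p * q := by
    rw [hsp', hsq']
  rw [Real.sq_sqrt (mul_pos hq0 hp0).le]
  ring
end

section
/- Combining canonical shaping invariance and the Bernoulli correlation formula: for a CLIP reward R_CLIP depending only on the state and a goal-indicator reward R = 1_{S_T}, the EPIC distance satisfies D_EPIC = (1/√2)·√(1 − (√Var(R)/√Var(R_CLIP))·(E[R_CLIP | S_T] − E[R_CLIP | S_T^C])). -/
open MeasureTheory

/-- EPIC distance of a CLIP reward from a goal-indicator reward. -/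
theorem epic_distance_goal_indicator
    {S : Type*} [MeasurableSpace S] (μ : Measure S) [IsProbabilityMeasure μ]
    (T : Set S) (hT : MeasurableSet T)
    (hp0 : 0 < (μ T).toReal) (hp1 : (μ T).toReal < 1)
    (Rc : S → ℝ) (hRc : MemLp Rc 2 μ) (hV : 0 < pvar μ Rc)
    (R : S → ℝ) (hR : R = T.indicator (fun _ => (1 : ℝ)))
    (D : ℝ) (hD : D = (1 / Real.sqrt 2) * Real.sqrt (1 - pearson μ Rc R)) :
    D = (1 / Real.sqrt 2) *
        Real.sqrt (1 - Real.sqrt (pvar μ R) / Real.sqrt (pvar μ Rc) *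
          ((∫ s in T, Rc s ∂μ) / (μ T).toReal - (∫ s in Tᶜ, Rc s ∂μ) / (μ Tᶜ).toReal)) := by
  subst hD
  set p : ℝ := (μ T).toReal with hp
  set q : ℝ := (μ Tᶜ).toReal with hq
  set A : ℝ := ∫ s in T, Rc s ∂μ with hA
  set B : ℝ := ∫ s in Tᶜ, Rc s ∂μ with hB
  have hμT : μ T ≠ ⊤ := measure_ne_top μ T
  have hμTc : μ Tᶜ ≠ ⊤ := measure_ne_top μ Tᶜ
  have hpq : p + q = 1 := by
    rw [hp, hq, ← ENNReal.toReal_add hμT hμTc, measure_add_measure_compl hT]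
    simp
  have hq0 : 0 < q := by linarith
  -- integrals of R
  have hintR : (∫ ω, R ω ∂μ) = p := by
    rw [hR, MeasureTheory.integral_indicator_const (1 : ℝ) hT, smul_eq_mul, mul_one]; rfl
  have hRR : ∀ ω, R ω * R ω = R ω := by
    intro ω
    rw [hR]
    by_cases h : ω ∈ T <;> simp [Set.indicator, h]
  have hvarR : pvar μ R = p * q := by
    unfold pvar pcov
    simp only [hRR]
    rw [hintR]; nlinarith
  have hRcR : ∀ ω, Rc ω * R ω = T.indicator Rc ω := by
    intro ω
    rw [hR]
    by_cases h : ω ∈ T <;> simp [Set.indicator, h]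
  have hint : Integrable Rc μ := hRc.integrable one_le_two
  have hsplit : (∫ ω, Rc ω ∂μ) = A + B := by
    rw [hA, hB, integral_add_compl hT hint]
  have hcov : pcov μ Rc R = A - (A + B) * p := by
    unfold pcov
    simp only [hRcR]
    rw [MeasureTheory.integral_indicator hT, hintR, hsplit]
  -- sqrt facts
  have hsv : Real.sqrt (p * q) * Real.sqrt (p * q) = p * q :=
    Real.mul_self_sqrt (le_of_lt (mul_pos hp0 hq0))
  have sp : Real.sqrt p * Real.sqrt p = p := Real.mul_self_sqrt hp0.le
  have sq' : Real.sqrt q * Real.sqrt q = q := Real.mul_self_sqrt hq0.le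
  have hsv0 : 0 < Real.sqrt (p * q) := Real.sqrt_pos.mpr (mul_pos hp0 hq0)
  have hsvc0 : 0 < Real.sqrt (pvar μ Rc) := Real.sqrt_pos.mpr hV
  have key : pearson μ Rc R
      = Real.sqrt (pvar μ R) / Real.sqrt (pvar μ Rc) * (A / p - B / q) := by
    unfold pearson
    rw [hcov, hvarR]
    field_simp
    linear_combination (-(p * q * A)) * hpq - (A * q - B * p) * hsv
  rw [key]
end
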